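/- arXiv:2402.02702 — 2 statements merged into one kernel-verified Lean document; each statement's English description precedes it below -/
import Mathlib

section
/- Product-form bias bound underlying double robustness (Theorem 2, bound by R₁,ₙ): there is a constant C, depending only on ε, M and P(S=0), such that for all admissible nuisance candidates μ̃₁₁, μ̃₁₀, μ̃₀₀, τ̃: | E[ H₁(μ̃₁₁, μ̃₁₀, μ̃₀₀, τ̃) ] − α₁ | ≤ C · ‖ μ̃₁₁/μ̃₁₀ − μ₁₁/μ₁₀ ‖ · ( ‖μ̃₀₀ − m₀‖ + ‖μ̃₁₀ − μ₁₀‖ + ‖τ̃ − τ‖ ). -/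
/-!
Write `r = μ₁₁/μ₁₀`, `r̃ = μ̃₁₁/μ̃₁₀` and `τ = (1 - g)/g`. On each of the strata `{S = 0}`,
`{S = 1, A = 1}`, `{S = 1, A = 0}` the outcome `Y` may be replaced by its conditional mean given
`X`, and the stratum indicator by `1 - g`, `g q`, `g (1 - q)` respectively. The inverse propensities
then cancel and the two residual terms of `H₁` combine, because
`(μ₁₁ - μ̃₁₁) - r̃ (μ₁₀ - μ̃₁₀) = -μ₁₀ (r̃ - r)`, into the exact representation
`E[H₁] - α₁ = κ E[(r̃ - r)(X) W(X)]` with `W = (1 - g) m₀ - g τ̃ (μ̃₀₀/μ̃₁₀) μ₁₀`.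
As `(1 - g) m₀ = g τ m₀`,
`W = g (τ (m₀ - μ̃₀₀) + μ̃₀₀ (τ - τ̃) + τ̃ (μ̃₀₀/μ̃₁₀) (μ̃₁₀ - μ₁₀))`, which is pointwise at most
`(M + M²/ε) (|μ̃₀₀ - m₀| + |μ̃₁₀ - μ₁₀| + |τ̃ - τ|)`; Cauchy–Schwarz gives the bound with
`C = κ (M + M²/ε)`.
-/

open MeasureTheory

/-- `m` is a version of the conditional expectation `E[Z ∣ X; B]`. -/
def IsVersion {Ω E : Type*} [MeasurableSpace Ω] [MeasurableSpace E]
    (P : Measure Ω) (X : Ω → E) (Z : Ω → ℝ) (B : Set Ω) (m : E → ℝ) : Prop :=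
  Measurable m ∧
    ∀ h : E → ℝ, Measurable h → (∃ C, ∀ x, |h x| ≤ C) →
      ∫ ω in B, Z ω * h (X ω) ∂P = ∫ ω in B, m (X ω) * h (X ω) ∂P

/-- Conditional mean `E[Z ∣ B]` of a real random variable given an event `B`. -/
noncomputable def condMean {Ω : Type*} [MeasurableSpace Ω]
    (P : Measure Ω) (Z : Ω → ℝ) (B : Set Ω) : ℝ :=
  (∫ ω in B, Z ω ∂P) / (P B).toReal

/-- The norm `‖f‖ = (E[f(X)²])^{1/2}`. -/
noncomputable def normX {Ω E : Type*} [MeasurableSpace Ω]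
    (P : Measure Ω) (X : Ω → E) (f : E → ℝ) : ℝ :=
  Real.sqrt (∫ ω, (f (X ω)) ^ 2 ∂P)

/-- Admissible nuisance candidates for Scenario 1. -/
def Admissible1 {Ω E : Type*} [MeasurableSpace Ω] [MeasurableSpace E]
    (P : Measure Ω) (X : Ω → E) (ε M : ℝ) (m11 m10 m00 t : E → ℝ) : Prop :=
  Measurable m11 ∧ Measurable m10 ∧ Measurable m00 ∧ Measurable t ∧
    ∀ᵐ ω ∂P, ε ≤ |m10 (X ω)| ∧ |m11 (X ω)| ≤ M ∧ |m10 (X ω)| ≤ M ∧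
      |m00 (X ω)| ≤ M ∧ 0 ≤ t (X ω) ∧ t (X ω) ≤ M

/-- The Scenario 1 uncentered estimating function `H₁`, with `κ = 1/P(S=0)`. -/
noncomputable def H1 {Ω E : Type*} [MeasurableSpace Ω]
    (P : Measure Ω) (X : Ω → E) (S A Y : Ω → ℝ) (q m11 m10 m00 t : E → ℝ) :
    Ω → ℝ := fun ω =>
  (P {ω' | S ω' = 0}).toReal⁻¹ *
    ((1 - S ω) * (m11 (X ω) / m10 (X ω)) * Y ω +
      S ω * t (X ω) * (m00 (X ω) / m10 (X ω)) *
        (A ω / q (X ω) * (Y ω - m11 (X ω)) -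
          (1 - A ω) / (1 - q (X ω)) * (m11 (X ω) / m10 (X ω)) * (Y ω - m10 (X ω))))

section

variable {Ω E : Type*} [MeasurableSpace Ω] {μ : Measure Ω}

theorem abs_one_sub_mul_sub_mul_le {g m e t n d M ε : ℝ} (hε : 0 < ε) (hg₀ : 0 < g)
    (hg₁ : g ≤ 1) (hτ : (1 - g) / g ≤ M) (hn : |n| ≤ M) (ht₀ : 0 ≤ t) (ht : t ≤ M)
    (hd : ε ≤ |d|) :
    |(1 - g) * m - g * (t * (n / d)) * e| ≤
      (M + M ^ 2 / ε) * (|n - m| + |d - e| + |t - (1 - g) / g|) := by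
  have hM : 0 ≤ M := (abs_nonneg n).trans hn
  have hτ₀ : 0 ≤ (1 - g) / g := div_nonneg (by linarith) hg₀.le
  have hφ : |t| * |n / d| ≤ M ^ 2 / ε := by
    rw [abs_of_nonneg ht₀, abs_div, sq, mul_div_assoc]
    exact mul_le_mul ht (div_le_div₀ hM hn hε hd) (by positivity) hM
  have hd₀ : d ≠ 0 := abs_pos.1 (hε.trans_le hd)
  have hW : (1 - g) * m - g * (t * (n / d)) * e =
      g * ((1 - g) / g * (m - n) + n * ((1 - g) / g - t) + t * (n / d) * (d - e)) := by
    field_simp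
    ring
  have hsplit : |(1 - g) * m - g * (t * (n / d)) * e| ≤
      (1 - g) / g * |n - m| + |n| * |t - (1 - g) / g| + |t| * |n / d| * |d - e| := by
    rw [hW, abs_mul, abs_of_pos hg₀]
    refine (mul_le_of_le_one_left (abs_nonneg _) hg₁).trans ?_
    refine ((abs_add_le _ _).trans (add_le_add_left (abs_add_le _ _) _)).trans_eq ?_
    simp only [abs_mul, abs_of_nonneg hτ₀, abs_sub_comm m, abs_sub_comm _ t]
  refine hsplit.trans ?_
  have : 0 ≤ M ^ 2 / ε := by positivity
  nlinarith [abs_nonneg (n - m), abs_nonneg (d - e), abs_nonneg (t - (1 - g) / g),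
    mul_le_mul_of_nonneg_right hτ (abs_nonneg (n - m)),
    mul_le_mul_of_nonneg_right hn (abs_nonneg (t - (1 - g) / g)),
    mul_le_mul_of_nonneg_right hφ (abs_nonneg (d - e))]

theorem one_sub_mul_add_mul_sub_mul_eq {g q m0 μ11 μ10 m11 m10 φ : ℝ} (hq₀ : q ≠ 0)
    (hq₁ : 1 - q ≠ 0) (hμ10 : μ10 ≠ 0) (hm10 : m10 ≠ 0) :
    (1 - g) * (m0 * (m11 / m10 - μ11 / μ10)) + g * (q * ((μ11 - m11) * (φ / q))) -
        g * ((1 - q) * ((μ10 - m10) * (m11 / m10 * φ / (1 - q)))) =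
      (m11 / m10 - μ11 / μ10) * ((1 - g) * m0 - g * φ * μ10) := by
  field_simp
  ring

theorem integral_abs_mul_abs_le_sqrt {f g : Ω → ℝ} (hf : MemLp f 2 μ) (hg : MemLp g 2 μ) :
    ∫ ω, |f ω| * |g ω| ∂μ ≤ √(∫ ω, f ω ^ 2 ∂μ) * √(∫ ω, g ω ^ 2 ∂μ) := by
  have h := integral_mul_norm_le_Lp_mul_Lq Real.HolderConjugate.two_two
    (by simpa using hf) (by simpa using hg)
  simpa [Real.norm_eq_abs, Real.sqrt_eq_rpow] using h

theorem abs_integral_mul_le_of_abs_le {δ W a b c : Ω → ℝ} {K : ℝ} (hK : 0 ≤ K)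
    (hδ : MemLp δ 2 μ) (ha : MemLp a 2 μ) (hb : MemLp b 2 μ) (hc : MemLp c 2 μ)
    (hW : ∀ᵐ ω ∂μ, |W ω| ≤ K * (|a ω| + |b ω| + |c ω|)) :
    |∫ ω, δ ω * W ω ∂μ| ≤ K * √(∫ ω, δ ω ^ 2 ∂μ) *
      (√(∫ ω, a ω ^ 2 ∂μ) + √(∫ ω, b ω ^ 2 ∂μ) + √(∫ ω, c ω ^ 2 ∂μ)) := by
  have hint : ∀ {u : Ω → ℝ}, MemLp u 2 μ → Integrable (fun ω => |δ ω| * |u ω|) μ :=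
    fun hu => hδ.abs.integrable_mul hu.abs
  have hab := (hint ha).fun_add (hint hb)
  calc |∫ ω, δ ω * W ω ∂μ| ≤ ∫ ω, |δ ω * W ω| ∂μ := abs_integral_le_integral_abs
    _ ≤ ∫ ω, K * (|δ ω| * |a ω| + |δ ω| * |b ω| + |δ ω| * |c ω|) ∂μ := by
        refine integral_mono_of_nonneg (ae_of_all _ fun _ => abs_nonneg _)
          ((hab.fun_add (hint hc)).const_mul K) (hW.mono fun ω hω => ?_)
        simp only [abs_mul]
        exact (mul_le_mul_of_nonneg_left hω (abs_nonneg _)).trans_eq (by ring)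
    _ = K * ((∫ ω, |δ ω| * |a ω| ∂μ) + (∫ ω, |δ ω| * |b ω| ∂μ) + ∫ ω, |δ ω| * |c ω| ∂μ) := by
        rw [integral_const_mul, integral_add hab (hint hc), integral_add (hint ha) (hint hb)]
    _ ≤ K * (√(∫ ω, δ ω ^ 2 ∂μ) * √(∫ ω, a ω ^ 2 ∂μ) + √(∫ ω, δ ω ^ 2 ∂μ) * √(∫ ω, b ω ^ 2 ∂μ) +
          √(∫ ω, δ ω ^ 2 ∂μ) * √(∫ ω, c ω ^ 2 ∂μ)) := by
        gcongr <;> exact integral_abs_mul_abs_le_sqrt hδ ‹_›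
    _ = _ := by ring

theorem setIntegral_setOf_eq_one {W : Ω → ℝ} (hW : Measurable W)
    (hW01 : ∀ ω, W ω = 0 ∨ W ω = 1) (F : Ω → ℝ) :
    ∫ ω in {ω | W ω = 1}, F ω ∂μ = ∫ ω, W ω * F ω ∂μ := by
  rw [← integral_indicator (measurableSet_eq_fun hW measurable_const)]
  congr 1 with ω
  rcases hW01 ω with h | h <;> simp [h]

theorem setIntegral_setOf_eq_zero {W F : Ω → ℝ} (hW : Measurable W)
    (hW01 : ∀ ω, W ω = 0 ∨ W ω = 1) (hF : Integrable F μ) :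
    ∫ ω in {ω | W ω = 0}, F ω ∂μ = ∫ ω, F ω ∂μ - ∫ ω in {ω | W ω = 1}, F ω ∂μ := by
  have hcompl : {ω | W ω = 0} = {ω | W ω = 1}ᶜ := by
    ext ω
    rcases hW01 ω with h | h <;> simp [h]
  rw [hcompl, setIntegral_compl (measurableSet_eq_fun hW measurable_const) hF]

theorem restrict_setOf_and {p r : Ω → Prop} (hr : MeasurableSet {ω | r ω}) :
    μ.restrict {ω | p ω ∧ r ω} = (μ.restrict {ω | p ω}).restrict {ω | r ω} := by
  rw [Measure.restrict_restrict hr, Set.inter_comm]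
  rfl

noncomputable def treatedWeight (q m10 m00 t : E → ℝ) : E → ℝ :=
  fun x => t x * (m00 x / m10 x) / q x

noncomputable def controlWeight (q m11 m10 m00 t : E → ℝ) : E → ℝ :=
  fun x => m11 x / m10 x * (t x * (m00 x / m10 x)) / (1 - q x)

theorem H1_eq_indicator {P : Measure Ω} {X : Ω → E} {S A Y : Ω → ℝ} (q m11 m10 m00 t : E → ℝ)
    {ω : Ω} (hS01 : S ω = 0 ∨ S ω = 1) (hA01 : A ω = 0 ∨ A ω = 1) :
    H1 P X S A Y q m11 m10 m00 t ω = (P {ω | S ω = 0}).toReal⁻¹ *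
      ({ω | S ω = 0}.indicator (fun ω => m11 (X ω) / m10 (X ω) * Y ω) ω +
        {ω | S ω = 1 ∧ A ω = 1}.indicator
          (fun ω => (Y ω - m11 (X ω)) * treatedWeight q m10 m00 t (X ω)) ω -
        {ω | S ω = 1 ∧ A ω = 0}.indicator
          (fun ω => (Y ω - m10 (X ω)) * controlWeight q m11 m10 m00 t (X ω)) ω) := by
  rcases hS01 with hS | hS <;> rcases hA01 with hA | hA <;>
    simp only [H1, treatedWeight, controlWeight, Set.indicator_apply, Set.mem_ofPred_eq, hS, hA,
      one_ne_zero, zero_ne_one, and_self, and_true, and_false, if_true, if_false] <;> ring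

variable [MeasurableSpace E]

def AEBddComp (P : Measure Ω) (X : Ω → E) (h : E → ℝ) : Prop :=
  Measurable h ∧ ∃ C, ∀ᵐ ω ∂P, |h (X ω)| ≤ C

namespace AEBddComp

variable {P : Measure Ω} {X : Ω → E} {f h : E → ℝ}

theorem const (c : ℝ) : AEBddComp P X fun _ => c :=
  ⟨measurable_const, |c|, ae_of_all _ fun _ => le_rfl⟩

theorem sub (hf : AEBddComp P X f) (hh : AEBddComp P X h) : AEBddComp P X fun x => f x - h x := by
  obtain ⟨hfm, Cf, hCf⟩ := hf
  obtain ⟨hhm, Ch, hCh⟩ := hh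
  exact ⟨hfm.sub hhm, Cf + Ch, by
    filter_upwards [hCf, hCh] with ω h₁ h₂ using (abs_sub _ _).trans (add_le_add h₁ h₂)⟩

theorem mul (hf : AEBddComp P X f) (hh : AEBddComp P X h) : AEBddComp P X fun x => f x * h x := by
  obtain ⟨hfm, Cf, hCf⟩ := hf
  obtain ⟨hhm, Ch, hCh⟩ := hh
  exact ⟨hfm.mul hhm, Cf * Ch, by
    filter_upwards [hCf, hCh] with ω h₁ h₂
    rw [abs_mul]
    exact mul_le_mul h₁ h₂ (abs_nonneg _) ((abs_nonneg _).trans h₁)⟩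

theorem div {ε : ℝ} (hf : AEBddComp P X f) (hh : Measurable h) (hε : 0 < ε)
    (hhε : ∀ᵐ ω ∂P, ε ≤ |h (X ω)|) : AEBddComp P X fun x => f x / h x := by
  obtain ⟨hfm, Cf, hCf⟩ := hf
  exact ⟨hfm.div hh, Cf / ε, by
    filter_upwards [hCf, hhε] with ω h₁ h₂
    rw [abs_div]
    exact div_le_div₀ ((abs_nonneg _).trans h₁) h₁ hε h₂⟩

theorem memLp [IsFiniteMeasure P] (hh : AEBddComp P X h) (hX : Measurable X) (p : ENNReal) :
    MemLp (fun ω => h (X ω)) p P := by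
  obtain ⟨hhm, C, hC⟩ := hh
  exact MemLp.of_bound (hhm.comp hX).aestronglyMeasurable C (by simpa only [Real.norm_eq_abs])

theorem integrable [IsFiniteMeasure P] (hh : AEBddComp P X h) (hX : Measurable X) :
    Integrable (fun ω => h (X ω)) P :=
  memLp_one_iff_integrable.1 (hh.memLp hX 1)

theorem integrable_mul {Z : Ω → ℝ} (hh : AEBddComp P X h) (hX : Measurable X)
    (hZ : Integrable Z P) : Integrable (fun ω => Z ω * h (X ω)) P := by
  obtain ⟨hhm, C, hC⟩ := hh
  exact hZ.mul_bdd (hhm.comp hX).aestronglyMeasurable (by simpa only [Real.norm_eq_abs])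

end AEBddComp

variable {P : Measure Ω} {X : Ω → E}

theorem IsVersion.setIntegral_mul_comp {Z : Ω → ℝ} {B : Set Ω} {m h : E → ℝ}
    (hv : IsVersion P X Z B m) (hh : AEBddComp P X h) :
    ∫ ω in B, Z ω * h (X ω) ∂P = ∫ ω in B, m (X ω) * h (X ω) ∂P := by
  obtain ⟨hhm, C, hC⟩ := hh
  -- clamped to `[-C, C]`, `h` becomes an admissible test function and is unchanged a.e. along `X`
  let h' : E → ℝ := fun x => max (-C) (min C (h x))
  have hclamp : ∀ᵐ ω ∂P.restrict B, h' (X ω) = h (X ω) := by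
    refine ae_restrict_of_ae (hC.mono fun ω hω => ?_)
    obtain ⟨h₁, h₂⟩ := abs_le.1 hω
    simp only [h', min_eq_right h₂, max_eq_right h₁]
  have hbdd : ∀ x, |h' x| ≤ |C| := fun x => abs_le.2
    ⟨neg_le_neg (le_abs_self C) |>.trans (le_max_left _ _),
      max_le (neg_le_abs C) ((min_le_left _ _).trans (le_abs_self C))⟩
  have key := hv.2 h' (measurable_const.max (measurable_const.min hhm)) ⟨|C|, hbdd⟩
  calc ∫ ω in B, Z ω * h (X ω) ∂P = ∫ ω in B, Z ω * h' (X ω) ∂P :=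
        integral_congr_ae (hclamp.mono fun ω hω => by simp only [hω])
    _ = ∫ ω in B, m (X ω) * h' (X ω) ∂P := key
    _ = ∫ ω in B, m (X ω) * h (X ω) ∂P :=
        integral_congr_ae (hclamp.mono fun ω hω => by simp only [hω])

variable {S A Y : Ω → ℝ} {g q h : E → ℝ}

theorem IsVersion.setIntegral_eq_one_eq_integral_mul (hg : IsVersion P X S Set.univ g)
    (hS : Measurable S) (hS01 : ∀ ω, S ω = 0 ∨ S ω = 1) (hh : AEBddComp P X h) :
    ∫ ω in {ω | S ω = 1}, h (X ω) ∂P = ∫ ω, g (X ω) * h (X ω) ∂P := by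
  simpa using (setIntegral_setOf_eq_one hS hS01 _).trans (hg.setIntegral_mul_comp hh)

theorem IsVersion.setIntegral_eq_zero_eq_integral_one_sub_mul [IsFiniteMeasure P]
    (hg : IsVersion P X S Set.univ g) (hgB : AEBddComp P X g) (hX : Measurable X)
    (hS : Measurable S) (hS01 : ∀ ω, S ω = 0 ∨ S ω = 1) (hh : AEBddComp P X h) :
    ∫ ω in {ω | S ω = 0}, h (X ω) ∂P = ∫ ω, (1 - g (X ω)) * h (X ω) ∂P := by
  rw [setIntegral_setOf_eq_zero hS hS01 (hh.integrable hX),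
    hg.setIntegral_eq_one_eq_integral_mul hS hS01 hh,
    ← integral_sub (hh.integrable hX) ((hgB.mul hh).integrable hX)]
  simp_rw [sub_mul, one_mul]

theorem IsVersion.setIntegral_and_eq_one_eq_integral_mul (hg : IsVersion P X S Set.univ g)
    (hq : IsVersion P X A {ω | S ω = 1} q) (hqB : AEBddComp P X q) (hS : Measurable S)
    (hS01 : ∀ ω, S ω = 0 ∨ S ω = 1) (hA : Measurable A) (hA01 : ∀ ω, A ω = 0 ∨ A ω = 1)
    (hh : AEBddComp P X h) :
    ∫ ω in {ω | S ω = 1 ∧ A ω = 1}, h (X ω) ∂P = ∫ ω, g (X ω) * (q (X ω) * h (X ω)) ∂P := by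
  rw [restrict_setOf_and (measurableSet_eq_fun hA measurable_const),
    setIntegral_setOf_eq_one hA hA01, hq.setIntegral_mul_comp hh,
    hg.setIntegral_eq_one_eq_integral_mul hS hS01 (hqB.mul hh)]

theorem IsVersion.setIntegral_and_eq_zero_eq_integral_mul [IsFiniteMeasure P]
    (hg : IsVersion P X S Set.univ g) (hgB : AEBddComp P X g)
    (hq : IsVersion P X A {ω | S ω = 1} q) (hqB : AEBddComp P X q) (hX : Measurable X)
    (hS : Measurable S) (hS01 : ∀ ω, S ω = 0 ∨ S ω = 1) (hA : Measurable A)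
    (hA01 : ∀ ω, A ω = 0 ∨ A ω = 1) (hh : AEBddComp P X h) :
    ∫ ω in {ω | S ω = 1 ∧ A ω = 0}, h (X ω) ∂P =
      ∫ ω, g (X ω) * ((1 - q (X ω)) * h (X ω)) ∂P := by
  rw [restrict_setOf_and (measurableSet_eq_fun hA measurable_const),
    setIntegral_setOf_eq_zero hA hA01 (hh.integrable hX).restrict,
    ← restrict_setOf_and (measurableSet_eq_fun hA measurable_const),
    hg.setIntegral_eq_one_eq_integral_mul hS hS01 hh,
    hg.setIntegral_and_eq_one_eq_integral_mul hq hqB hS hS01 hA hA01 hh,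
    ← integral_sub ((hgB.mul hh).integrable hX) ((hgB.mul (hqB.mul hh)).integrable hX)]
  congr 1 with ω
  ring

theorem IsVersion.setIntegral_sub_mul [IsFiniteMeasure P] {Z : Ω → ℝ} {B : Set Ω} {m f : E → ℝ}
    (hv : IsVersion P X Z B m) (hX : Measurable X) (hZ : Integrable Z P)
    (hm : AEBddComp P X m) (hf : AEBddComp P X f) (hh : AEBddComp P X h) :
    ∫ ω in B, (Z ω - f (X ω)) * h (X ω) ∂P = ∫ ω in B, (m (X ω) - f (X ω)) * h (X ω) ∂P := by
  simp_rw [sub_mul]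
  rw [integral_sub (hh.integrable_mul hX hZ).restrict ((hf.mul hh).integrable hX).restrict,
    integral_sub ((hm.mul hh).integrable hX).restrict ((hf.mul hh).integrable hX).restrict,
    hv.setIntegral_mul_comp hh]

theorem IsVersion.setIntegral_sub_eq_integral_one_sub_mul [IsFiniteMeasure P] {m0 f f' : E → ℝ}
    (hm0 : IsVersion P X Y {ω | S ω = 0} m0) (hg : IsVersion P X S Set.univ g)
    (hX : Measurable X) (hS : Measurable S) (hS01 : ∀ ω, S ω = 0 ∨ S ω = 1) (hY : Integrable Y P)
    (hm0B : AEBddComp P X m0) (hgB : AEBddComp P X g) (hf : AEBddComp P X f)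
    (hf' : AEBddComp P X f') :
    (∫ ω in {ω | S ω = 0}, f (X ω) * Y ω ∂P) - ∫ ω in {ω | S ω = 0}, f' (X ω) * Y ω ∂P =
      ∫ ω, (1 - g (X ω)) * (m0 (X ω) * (f (X ω) - f' (X ω))) ∂P := by
  rw [← integral_sub, ← hg.setIntegral_eq_zero_eq_integral_one_sub_mul hgB hX hS hS01
    (hm0B.mul (hf.sub hf')), ← hm0.setIntegral_mul_comp (hf.sub hf')]
  · congr 1 with ω
    ring
  · simpa only [mul_comm] using (hf.integrable_mul hX hY).restrict
  · simpa only [mul_comm] using (hf'.integrable_mul hX hY).restrict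

theorem Admissible1.aeBddComp {ε M : ℝ} {m11 m10 m00 t : E → ℝ}
    (h : Admissible1 P X ε M m11 m10 m00 t) :
    AEBddComp P X m11 ∧ AEBddComp P X m10 ∧ AEBddComp P X m00 ∧ AEBddComp P X t ∧
      ∀ᵐ ω ∂P, ε ≤ |m10 (X ω)| := by
  obtain ⟨hm11, hm10, hm00, ht, hb⟩ := h
  exact ⟨⟨hm11, M, hb.mono fun _ h => h.2.1⟩, ⟨hm10, M, hb.mono fun _ h => h.2.2.1⟩,
    ⟨hm00, M, hb.mono fun _ h => h.2.2.2.1⟩,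
    ⟨ht, M, hb.mono fun _ h => (abs_of_nonneg h.2.2.2.2.1).trans_le h.2.2.2.2.2⟩,
    hb.mono fun _ h => h.1⟩

theorem integral_H1_eq [IsFiniteMeasure P] {m11 m10 m00 t : E → ℝ} (hX : Measurable X)
    (hS : Measurable S) (hA : Measurable A) (hY : Integrable Y P)
    (hS01 : ∀ ω, S ω = 0 ∨ S ω = 1) (hA01 : ∀ ω, A ω = 0 ∨ A ω = 1)
    (hm11 : AEBddComp P X m11) (hm10 : AEBddComp P X m10)
    (hr : AEBddComp P X fun x => m11 x / m10 x) (hw₁ : AEBddComp P X (treatedWeight q m10 m00 t))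
    (hw₀ : AEBddComp P X (controlWeight q m11 m10 m00 t)) :
    ∫ ω, H1 P X S A Y q m11 m10 m00 t ω ∂P = (P {ω | S ω = 0}).toReal⁻¹ *
      ((∫ ω in {ω | S ω = 0}, m11 (X ω) / m10 (X ω) * Y ω ∂P) +
        (∫ ω in {ω | S ω = 1 ∧ A ω = 1}, (Y ω - m11 (X ω)) * treatedWeight q m10 m00 t (X ω) ∂P) -
        ∫ ω in {ω | S ω = 1 ∧ A ω = 0},
          (Y ω - m10 (X ω)) * controlWeight q m11 m10 m00 t (X ω) ∂P) := by
  have hB₀ : MeasurableSet {ω | S ω = 0} := measurableSet_eq_fun hS measurable_const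
  have hB₁₁ : MeasurableSet {ω | S ω = 1 ∧ A ω = 1} :=
    (measurableSet_eq_fun hS measurable_const).inter (measurableSet_eq_fun hA measurable_const)
  have hB₁₀ : MeasurableSet {ω | S ω = 1 ∧ A ω = 0} :=
    (measurableSet_eq_fun hS measurable_const).inter (measurableSet_eq_fun hA measurable_const)
  have hI₀ : Integrable (fun ω => m11 (X ω) / m10 (X ω) * Y ω) P := by
    simpa only [mul_comm] using hr.integrable_mul hX hY
  have hI₁₁ : Integrable (fun ω => (Y ω - m11 (X ω)) * treatedWeight q m10 m00 t (X ω)) P :=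
    hw₁.integrable_mul hX (hY.sub (hm11.integrable hX))
  have hI₁₀ : Integrable (fun ω => (Y ω - m10 (X ω)) * controlWeight q m11 m10 m00 t (X ω)) P :=
    hw₀.integrable_mul hX (hY.sub (hm10.integrable hX))
  rw [integral_congr_ae (ae_of_all _ fun ω => H1_eq_indicator q m11 m10 m00 t (hS01 ω) (hA01 ω)),
    integral_const_mul, integral_sub ((hI₀.indicator hB₀).fun_add (hI₁₁.indicator hB₁₁))
      (hI₁₀.indicator hB₁₀), integral_add (hI₀.indicator hB₀) (hI₁₁.indicator hB₁₁),
    integral_indicator hB₀, integral_indicator hB₁₁, integral_indicator hB₁₀]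

theorem integral_H1_sub_condMean_eq [IsFiniteMeasure P] {μ11 μ10 m0 m11 m10 m00 t : E → ℝ}
    {ε M : ℝ} (hX : Measurable X) (hS : Measurable S) (hA : Measurable A) (hY : Integrable Y P)
    (hS01 : ∀ ω, S ω = 0 ∨ S ω = 1) (hA01 : ∀ ω, A ω = 0 ∨ A ω = 1)
    (hμ11 : IsVersion P X Y {ω | S ω = 1 ∧ A ω = 1} μ11)
    (hμ10 : IsVersion P X Y {ω | S ω = 1 ∧ A ω = 0} μ10)
    (hm0 : IsVersion P X Y {ω | S ω = 0} m0) (hg : IsVersion P X S Set.univ g)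
    (hq : IsVersion P X A {ω | S ω = 1} q)
    (hε : 0 < ε) (hgB : AEBddComp P X g) (hqε : ∀ᵐ ω ∂P, ε ≤ q (X ω) ∧ q (X ω) ≤ 1 - ε)
    (hμ11B : AEBddComp P X μ11) (hμ10B : AEBddComp P X μ10) (hm0B : AEBddComp P X m0)
    (hμ10ε : ∀ᵐ ω ∂P, ε ≤ |μ10 (X ω)|) (hadm : Admissible1 P X ε M m11 m10 m00 t) :
    (∫ ω, H1 P X S A Y q m11 m10 m00 t ω ∂P) -
        condMean P (fun ω => μ11 (X ω) / μ10 (X ω) * Y ω) {ω | S ω = 0} =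
      (P {ω | S ω = 0}).toReal⁻¹ * ∫ ω, (m11 (X ω) / m10 (X ω) - μ11 (X ω) / μ10 (X ω)) *
        ((1 - g (X ω)) * m0 (X ω) -
          g (X ω) * (t (X ω) * (m00 (X ω) / m10 (X ω))) * μ10 (X ω)) ∂P := by
  obtain ⟨hm11B, hm10B, hm00B, htB, hm10ε⟩ := hadm.aeBddComp
  have hqB : AEBddComp P X q := ⟨hq.1, 1, hqε.mono fun _ h => abs_le.2 ⟨by linarith, by linarith⟩⟩
  have hr : AEBddComp P X fun x => m11 x / m10 x := hm11B.div hm10B.1 hε hm10ε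
  have hr₀ : AEBddComp P X fun x => μ11 x / μ10 x := hμ11B.div hμ10B.1 hε hμ10ε
  have hφ : AEBddComp P X fun x => t x * (m00 x / m10 x) := htB.mul (hm00B.div hm10B.1 hε hm10ε)
  have hw₁ : AEBddComp P X (treatedWeight q m10 m00 t) :=
    hφ.div hqB.1 hε (hqε.mono fun _ h => h.1.trans (le_abs_self _))
  have hw₀ : AEBddComp P X (controlWeight q m11 m10 m00 t) :=
    (hr.mul hφ).div (measurable_const.sub hqB.1) hε
      (hqε.mono fun _ h => (by linarith : ε ≤ 1 - _).trans (le_abs_self _))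
  have hJ₀ := (((AEBddComp.const 1).sub hgB).mul (hm0B.mul (hr.sub hr₀))).integrable hX
  have hJ₁₁ := (hgB.mul (hqB.mul ((hμ11B.sub hm11B).mul hw₁))).integrable hX
  have hJ₁₀ :=
    (hgB.mul (((AEBddComp.const 1).sub hqB).mul ((hμ10B.sub hm10B).mul hw₀))).integrable hX
  rw [integral_H1_eq hX hS hA hY hS01 hA01 hm11B hm10B hr hw₁ hw₀, condMean, div_eq_inv_mul,
    ← mul_sub, sub_right_comm, add_sub_right_comm,
    hm0.setIntegral_sub_eq_integral_one_sub_mul hg hX hS hS01 hY hm0B hgB hr hr₀,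
    hμ11.setIntegral_sub_mul hX hY hμ11B hm11B hw₁,
    hg.setIntegral_and_eq_one_eq_integral_mul hq hqB hS hS01 hA hA01 ((hμ11B.sub hm11B).mul hw₁),
    hμ10.setIntegral_sub_mul hX hY hμ10B hm10B hw₀,
    hg.setIntegral_and_eq_zero_eq_integral_mul hgB hq hqB hX hS hS01 hA hA01
      ((hμ10B.sub hm10B).mul hw₀), ← integral_add hJ₀ hJ₁₁, ← integral_sub (hJ₀.fun_add hJ₁₁) hJ₁₀]
  congr 1
  refine integral_congr_ae ?_
  filter_upwards [hqε, hμ10ε, hm10ε] with ω hqω hμω hmω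
  exact one_sub_mul_add_mul_sub_mul_eq (hε.trans_le hqω.1).ne' (by linarith)
    (abs_pos.1 (hε.trans_le hμω)) (abs_pos.1 (hε.trans_le hmω))

end

theorem H1_product_bias_bound_general
    {Ω E : Type*} [MeasurableSpace Ω] [MeasurableSpace E]
    (P : Measure Ω) [IsProbabilityMeasure P]
    (X : Ω → E) (S A Y : Ω → ℝ)
    (hX : Measurable X) (hS : Measurable S) (hA : Measurable A) (hY : Measurable Y)
    (hS01 : ∀ ω, S ω = 0 ∨ S ω = 1) (hA01 : ∀ ω, A ω = 0 ∨ A ω = 1)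
    (μ11 μ10 m0 g q : E → ℝ)
    (hμ11 : IsVersion P X Y {ω | S ω = 1 ∧ A ω = 1} μ11)
    (hμ10 : IsVersion P X Y {ω | S ω = 1 ∧ A ω = 0} μ10)
    (hm0 : IsVersion P X Y {ω | S ω = 0} m0)
    (hg : IsVersion P X S Set.univ g)
    (hq : IsVersion P X A {ω | S ω = 1} q)
    (ε M : ℝ) (hε0 : 0 < ε) (hM : 1 ≤ M)
    (hbd : ∀ᵐ ω ∂P,
      ε ≤ g (X ω) ∧ g (X ω) ≤ 1 - ε ∧ ε ≤ q (X ω) ∧ q (X ω) ≤ 1 - ε ∧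
      ε ≤ |μ10 (X ω)| ∧ |μ11 (X ω)| ≤ M ∧ |μ10 (X ω)| ≤ M ∧ |m0 (X ω)| ≤ M ∧
      |Y ω| ≤ M ∧ (1 - g (X ω)) / g (X ω) ≤ M)
    :
    ∃ C : ℝ, ∀ m11 m10 m00 t : E → ℝ, Admissible1 P X ε M m11 m10 m00 t →
      |(∫ ω, H1 P X S A Y q m11 m10 m00 t ω ∂P) -
          condMean P (fun ω => μ11 (X ω) / μ10 (X ω) * Y ω) {ω | S ω = 0}|
        ≤ C * normX P X (fun x => m11 x / m10 x - μ11 x / μ10 x) *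
            (normX P X (fun x => m00 x - m0 x) +
              normX P X (fun x => m10 x - μ10 x) +
              normX P X (fun x => t x - (1 - g x) / g x)) := by
  refine ⟨(P {ω | S ω = 0}).toReal⁻¹ * (M + M ^ 2 / ε), fun m11 m10 m00 t hadm => ?_⟩
  have hgB : AEBddComp P X g :=
    ⟨hg.1, 1, hbd.mono fun _ h => abs_le.2 ⟨by linarith [h.1], by linarith [h.2.1]⟩⟩
  have hμ11B : AEBddComp P X μ11 := ⟨hμ11.1, M, hbd.mono fun _ h => h.2.2.2.2.2.1⟩
  have hμ10B : AEBddComp P X μ10 := ⟨hμ10.1, M, hbd.mono fun _ h => h.2.2.2.2.2.2.1⟩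
  have hm0B : AEBddComp P X m0 := ⟨hm0.1, M, hbd.mono fun _ h => h.2.2.2.2.2.2.2.1⟩
  have hτB : AEBddComp P X fun x => (1 - g x) / g x := ((AEBddComp.const 1).sub hgB).div hg.1
    hε0 (hbd.mono fun _ h => h.1.trans (le_abs_self _))
  obtain ⟨hm11B, hm10B, hm00B, htB, hm10ε⟩ := hadm.aeBddComp
  have hμ10ε : ∀ᵐ ω ∂P, ε ≤ |μ10 (X ω)| := hbd.mono fun _ h => h.2.2.2.2.1
  have hδ := (hm11B.div hm10B.1 hε0 hm10ε).sub (hμ11B.div hμ10B.1 hε0 hμ10ε)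
  have hk : 0 ≤ (P {ω | S ω = 0}).toReal⁻¹ := inv_nonneg.2 ENNReal.toReal_nonneg
  rw [integral_H1_sub_condMean_eq hX hS hA
      (Integrable.of_bound hY.aestronglyMeasurable M (hbd.mono fun _ h => h.2.2.2.2.2.2.2.2.1))
      hS01 hA01 hμ11 hμ10 hm0 hg hq hε0 hgB (hbd.mono fun _ h => ⟨h.2.2.1, h.2.2.2.1⟩)
      hμ11B hμ10B hm0B hμ10ε hadm,
    abs_mul, abs_of_nonneg hk, mul_assoc (P {ω | S ω = 0}).toReal⁻¹,
    mul_assoc (P {ω | S ω = 0}).toReal⁻¹]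
  refine mul_le_mul_of_nonneg_left (abs_integral_mul_le_of_abs_le (by positivity)
    (hδ.memLp hX 2) ((hm00B.sub hm0B).memLp hX 2) ((hm10B.sub hμ10B).memLp hX 2)
    ((htB.sub hτB).memLp hX 2) ?_) hk
  filter_upwards [hbd, hadm.2.2.2.2] with ω h h'
  exact abs_one_sub_mul_sub_mul_le hε0 (hε0.trans_le h.1) (by linarith [h.2.1])
    h.2.2.2.2.2.2.2.2.2 h'.2.2.2.1 h'.2.2.2.2.1 h'.2.2.2.2.2 h'.1

/-- Product-form bias bound underlying double robustness (Theorem 2, bound by `R₁,ₙ`):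
there is a constant `C`, depending only on `ε`, `M` and `P(S=0)`, such that for all
admissible nuisance candidates,
`|E[H₁(μ̃₁₁,μ̃₁₀,μ̃₀₀,τ̃)] − α₁| ≤ C·‖μ̃₁₁/μ̃₁₀ − μ₁₁/μ₁₀‖·(‖μ̃₀₀ − m₀‖ + ‖μ̃₁₀ − μ₁₀‖ + ‖τ̃ − τ‖)`. -/
theorem H1_product_bias_bound
    {Ω E : Type*} [MeasurableSpace Ω] [MeasurableSpace E]
    (P : Measure Ω) [IsProbabilityMeasure P]
    (X : Ω → E) (S A Y : Ω → ℝ)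
    (hX : Measurable X) (hS : Measurable S) (hA : Measurable A) (hY : Measurable Y)
    (hS01 : ∀ ω, S ω = 0 ∨ S ω = 1) (hA01 : ∀ ω, A ω = 0 ∨ A ω = 1)
    (hPS0 : 0 < P {ω | S ω = 0})
    (hPS1A1 : 0 < P {ω | S ω = 1 ∧ A ω = 1})
    (hPS1A0 : 0 < P {ω | S ω = 1 ∧ A ω = 0})
    (μ11 μ10 m0 g q : E → ℝ)
    (hμ11 : IsVersion P X Y {ω | S ω = 1 ∧ A ω = 1} μ11)
    (hμ10 : IsVersion P X Y {ω | S ω = 1 ∧ A ω = 0} μ10)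
    (hm0 : IsVersion P X Y {ω | S ω = 0} m0)
    (hg : IsVersion P X S Set.univ g)
    (hq : IsVersion P X A {ω | S ω = 1} q)
    (ε M : ℝ) (hε0 : 0 < ε) (hε1 : ε < 1) (hM : 1 ≤ M)
    (hbd : ∀ᵐ ω ∂P,
      ε ≤ g (X ω) ∧ g (X ω) ≤ 1 - ε ∧ ε ≤ q (X ω) ∧ q (X ω) ≤ 1 - ε ∧
      ε ≤ |μ10 (X ω)| ∧ |μ11 (X ω)| ≤ M ∧ |μ10 (X ω)| ≤ M ∧ |m0 (X ω)| ≤ M ∧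
      |Y ω| ≤ M ∧ (1 - g (X ω)) / g (X ω) ≤ M)
    (htruth : Admissible1 P X ε M μ11 μ10 m0 (fun x => (1 - g x) / g x))
    :
    ∃ C : ℝ, ∀ m11 m10 m00 t : E → ℝ, Admissible1 P X ε M m11 m10 m00 t →
      |(∫ ω, H1 P X S A Y q m11 m10 m00 t ω ∂P) -
          condMean P (fun ω => μ11 (X ω) / μ10 (X ω) * Y ω) {ω | S ω = 0}|
        ≤ C * normX P X (fun x => m11 x / m10 x - μ11 x / μ10 x) *
            (normX P X (fun x => m00 x - m0 x) +
              normX P X (fun x => m10 x - μ10 x) +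
              normX P X (fun x => t x - (1 - g x) / g x)) :=
  H1_product_bias_bound_general P X S A Y hX hS hA hY hS01 hA01 μ11 μ10 m0 g q hμ11 hμ10 hm0 hg hq ε
    M hε0 hM hbd
end

section
/- Model double robustness in Scenario 1 (Section 2.4): for admissible nuisance candidates μ̃₁₁, μ̃₁₀, μ̃₀₀, τ̃, if either (a) μ̃₁₁/μ̃₁₀ = μ₁₁/μ₁₀ holds P∘X⁻¹-a.e., or (b) μ̃₀₀ = m₀, μ̃₁₀ = μ₁₀ and τ̃ = τ hold P∘X⁻¹-a.e., then E[ H₁(μ̃₁₁, μ̃₁₀, μ̃₀₀, τ̃) ] = α₁. -/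
open MeasureTheory

/-!
Write `r = μ₁₁/μ₁₀` and `r̃ = μ̃₁₁/μ̃₁₀`. Pointwise, `κ⁻¹H₁ - (1 - S) r Y` is the sum
of four residual terms `1_B (Z - E[Z | X; B]) h(X)` with `h` essentially bounded, namely
`(1 - S)(Y - m₀)`, `SA (Y - μ₁₁)`, `S(1 - A)(Y - μ₁₀)` and `S (A - q)`, plus the bias
`(S τ̃ (μ̃₀₀/μ̃₁₀) μ₁₀ - (1 - S) m₀)(r - r̃)`. The residual terms have mean zero by the
defining property of versions. The bias vanishes in case (a); in case (b) it equals
`(S - g(X)) m₀ (r - r̃) / g(X)`, which has mean zero because `g` is a version of `E[S | X]`.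
-/

open scoped ENNReal

theorem Set.indicator_eq_indicator_one_mul {α M₀ : Type*} [MulZeroOneClass M₀] (B : Set α)
    (F : α → M₀) (a : α) : B.indicator F a = B.indicator 1 a * F a := by
  by_cases ha : a ∈ B <;> simp [ha]

section ZeroOne

variable {α : Type*} {S A : α → ℝ}

theorem indicator_one_setOf_eq_one (hS : ∀ a, S a = 0 ∨ S a = 1) :
    {a | S a = 1}.indicator 1 = S := by
  funext a
  rcases hS a with h | h <;> simp [Set.indicator, h]

theorem indicator_one_setOf_eq_zero (hS : ∀ a, S a = 0 ∨ S a = 1) :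
    {a | S a = 0}.indicator 1 = fun a => 1 - S a := by
  funext a
  rcases hS a with h | h <;> simp [Set.indicator, h]

theorem indicator_one_setOf_eq_one_and_eq_one (hS : ∀ a, S a = 0 ∨ S a = 1)
    (hA : ∀ a, A a = 0 ∨ A a = 1) :
    {a | S a = 1 ∧ A a = 1}.indicator 1 = fun a => S a * A a := by
  rw [Set.ofPred_and, Set.inter_indicator_one, indicator_one_setOf_eq_one hS,
    indicator_one_setOf_eq_one hA]
  rfl

theorem indicator_one_setOf_eq_one_and_eq_zero (hS : ∀ a, S a = 0 ∨ S a = 1)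
    (hA : ∀ a, A a = 0 ∨ A a = 1) :
    {a | S a = 1 ∧ A a = 0}.indicator 1 = fun a => S a * (1 - A a) := by
  rw [Set.ofPred_and, Set.inter_indicator_one, indicator_one_setOf_eq_one hS,
    indicator_one_setOf_eq_zero hA]
  rfl

end ZeroOne

section Centered

variable {Ω : Type*} [MeasurableSpace Ω] {P : Measure Ω}

def IsCentered (P : Measure Ω) (F : Ω → ℝ) : Prop :=
  Integrable F P ∧ ∫ ω, F ω ∂P = 0

theorem IsCentered.add {F G : Ω → ℝ} (hF : IsCentered P F) (hG : IsCentered P G) :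
    IsCentered P (fun ω => F ω + G ω) :=
  ⟨hF.1.add hG.1, by rw [integral_add hF.1 hG.1, hF.2, hG.2, add_zero]⟩

theorem IsCentered.sub {F G : Ω → ℝ} (hF : IsCentered P F) (hG : IsCentered P G) :
    IsCentered P (fun ω => F ω - G ω) :=
  ⟨hF.1.sub hG.1, by rw [integral_sub hF.1 hG.1, hF.2, hG.2, sub_zero]⟩

theorem IsCentered.congr {F G : Ω → ℝ} (hF : IsCentered P F) (h : F =ᵐ[P] G) :
    IsCentered P G :=
  ⟨hF.1.congr h, by rw [← integral_congr_ae h, hF.2]⟩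

theorem isCentered_of_ae_eq_zero {F : Ω → ℝ} (h : F =ᵐ[P] 0) : IsCentered P F :=
  ⟨(integrable_zero Ω ℝ P).congr h.symm, by rw [integral_congr_ae h, integral_zero']⟩

theorem integral_inv_mul_eq_condMean {S F G : Ω → ℝ} (hS : Measurable S)
    (hS01 : ∀ ω, S ω = 0 ∨ S ω = 1) (hG : Integrable G P)
    (hFG : IsCentered P (fun ω => F ω - (1 - S ω) * G ω)) :
    ∫ ω, (P {ω | S ω = 0}).toReal⁻¹ * F ω ∂P = condMean P G {ω | S ω = 0} := by
  have hB : MeasurableSet {ω | S ω = 0} := hS (measurableSet_singleton 0)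
  have hweight : (fun ω => (1 - S ω) * G ω) = {ω | S ω = 0}.indicator G := by
    funext ω
    rw [Set.indicator_eq_indicator_one_mul, indicator_one_setOf_eq_zero hS01]
  have hSG : Integrable (fun ω => (1 - S ω) * G ω) P := hweight ▸ hG.indicator hB
  have hF : Integrable F P :=
    (hFG.1.add hSG).congr (ae_of_all _ fun ω => sub_add_cancel _ _)
  have hFSG : ∫ ω, F ω ∂P = ∫ ω, (1 - S ω) * G ω ∂P :=
    sub_eq_zero.1 ((integral_sub hF hSG).symm.trans hFG.2)
  rw [integral_const_mul, hFSG, hweight, integral_indicator hB, condMean, inv_mul_eq_div]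

end Centered

section EssentiallyBounded

variable {Ω E : Type*} [MeasurableSpace Ω] {P : Measure Ω}

theorem memLp_top_of_abs_le {f : Ω → ℝ} (hf : AEStronglyMeasurable f P) {C : ℝ}
    (hC : ∀ᵐ ω ∂P, |f ω| ≤ C) : MemLp f ∞ P :=
  memLp_top_of_bound hf C (by simpa only [Real.norm_eq_abs] using hC)

theorem memLp_top_comp_of_abs_le [MeasurableSpace E] {X : Ω → E} {f : E → ℝ}
    (hX : Measurable X) (hf : Measurable f) {C : ℝ} (hC : ∀ᵐ ω ∂P, |f (X ω)| ≤ C) :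
    MemLp (fun ω => f (X ω)) ∞ P :=
  memLp_top_of_abs_le (hf.comp hX).aestronglyMeasurable hC

theorem memLp_top_of_zero_or_one {S : Ω → ℝ} (hS : Measurable S)
    (hS01 : ∀ ω, S ω = 0 ∨ S ω = 1) : MemLp S ∞ P :=
  memLp_top_of_abs_le hS.aestronglyMeasurable
    (ae_of_all _ fun ω => show |S ω| ≤ 1 by rcases hS01 ω with h | h <;> simp [h])

theorem MeasureTheory.MemLp.div_of_le_abs {f g : Ω → ℝ} (hf : MemLp f ∞ P)
    (hg : AEStronglyMeasurable g P) {ε : ℝ} (hε : 0 < ε)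
    (hgε : ∀ᵐ ω ∂P, ε ≤ |g ω|) :
    MemLp (fun ω => f ω / g ω) ∞ P := by
  have hinv : MemLp (fun ω => (g ω)⁻¹) ∞ P :=
    memLp_top_of_abs_le hg.aemeasurable.inv.aestronglyMeasurable
      (hgε.mono fun ω hω => by rw [abs_inv]; exact inv_anti₀ hε hω)
  simpa only [div_eq_mul_inv] using hinv.mul' hf

end EssentiallyBounded

section Version

variable {Ω E : Type*} [MeasurableSpace Ω] [MeasurableSpace E] {P : Measure Ω} {X : Ω → E}
  {Z : Ω → ℝ} {B : Set Ω} {m h : E → ℝ}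

theorem IsVersion.setIntegral_mul_eq (hver : IsVersion P X Z B m) (hh : Measurable h)
    (hhX : MemLp (fun ω => h (X ω)) ∞ P) :
    ∫ ω in B, Z ω * h (X ω) ∂P = ∫ ω in B, m (X ω) * h (X ω) ∂P := by
  obtain ⟨C, hC0, hCX⟩ : ∃ C, 0 ≤ C ∧ ∀ᵐ ω ∂P, |h (X ω)| ≤ C :=
    ⟨_, lpNorm_nonneg, by simpa only [Real.norm_eq_abs] using ae_le_lpNorm_exponent_top hhX⟩
  -- truncating `h` at the essential bound of `h ∘ X` gives a bounded test function
  set hcut : E → ℝ := fun x => max (-C) (min C (h x))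
  have hcut_bdd : ∀ x, |hcut x| ≤ C := fun x =>
    abs_le.2 ⟨le_max_left _ _, max_le (neg_le_self hC0) (min_le_left _ _)⟩
  have hcut_ae : ∀ᵐ ω ∂P, hcut (X ω) = h (X ω) := by
    filter_upwards [hCX] with ω hω
    rw [abs_le] at hω
    simp only [hcut, min_eq_right hω.2, max_eq_right hω.1]
  have hcongr (k : Ω → ℝ) :
      ∫ ω in B, k ω * hcut (X ω) ∂P = ∫ ω in B, k ω * h (X ω) ∂P :=
    integral_congr_ae (ae_restrict_of_ae (hcut_ae.mono fun ω hω => by simp only [hω]))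
  have key := hver.2 hcut (measurable_const.max (measurable_const.min hh)) ⟨C, hcut_bdd⟩
  rwa [hcongr, hcongr] at key

theorem IsVersion.isCentered (hver : IsVersion P X Z B m) (hB : MeasurableSet B) {w : Ω → ℝ}
    (hw : B.indicator 1 = w) (hZ : Integrable Z P) (hm : Integrable (fun ω => m (X ω)) P)
    (hh : Measurable h) (hhX : MemLp (fun ω => h (X ω)) ∞ P) :
    IsCentered P (fun ω => w ω * ((Z ω - m (X ω)) * h (X ω))) := by
  have hweight : (fun ω => w ω * ((Z ω - m (X ω)) * h (X ω)))
      = B.indicator (fun ω => (Z ω - m (X ω)) * h (X ω)) := by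
    funext ω
    rw [Set.indicator_eq_indicator_one_mul, hw]
  have hZh : Integrable (fun ω => Z ω * h (X ω)) P := hZ.mul_of_top_left hhX
  have hmh : Integrable (fun ω => m (X ω) * h (X ω)) P := hm.mul_of_top_left hhX
  have hint : Integrable (fun ω => (Z ω - m (X ω)) * h (X ω)) P :=
    (hZ.sub hm).mul_of_top_left hhX
  rw [hweight]
  refine ⟨hint.indicator hB, ?_⟩
  rw [integral_indicator hB]
  simp_rw [sub_mul]
  rw [integral_sub hZh.integrableOn hmh.integrableOn, hver.setIntegral_mul_eq hh hhX, sub_self]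

end Version

-- The bracket in `H1`: `H1 P X S A Y q m11 m10 m00 t ω = κ * h1Core (S ω) (A ω) …` by `rfl`.
noncomputable def h1Core (S A Y q m11 m10 m00 t : ℝ) : ℝ :=
  (1 - S) * (m11 / m10) * Y +
    S * t * (m00 / m10) * (A / q * (Y - m11) - (1 - A) / (1 - q) * (m11 / m10) * (Y - m10))

noncomputable def h1Residual (S A Y q m11 m10 m00 t μ11 μ10 m0 : ℝ) : ℝ :=
  (1 - S) * ((Y - m0) * (m11 / m10 - μ11 / μ10)) +
    S * A * ((Y - μ11) * (t * (m00 / m10) / q)) -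
    S * (1 - A) * ((Y - μ10) * (t * (m00 / m10) * (m11 / m10) / (1 - q))) +
    S * ((A - q) * ((μ11 - m11) * (t * (m00 / m10) / q) +
      (μ10 - m10) * (t * (m00 / m10) * (m11 / m10) / (1 - q))))

noncomputable def h1Bias (S μ11 μ10 m0 m11 m10 m00 t : ℝ) : ℝ :=
  (S * (t * (m00 / m10)) * μ10 - (1 - S) * m0) * (μ11 / μ10 - m11 / m10)

theorem h1Core_sub_eq {S A Y q m11 m10 m00 t μ11 μ10 m0 : ℝ} (hq : q ≠ 0) (hq' : 1 - q ≠ 0)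
    (hm10 : m10 ≠ 0) (hμ10 : μ10 ≠ 0) :
    h1Core S A Y q m11 m10 m00 t - (1 - S) * (μ11 / μ10 * Y) =
      h1Residual S A Y q m11 m10 m00 t μ11 μ10 m0 + h1Bias S μ11 μ10 m0 m11 m10 m00 t := by
  unfold h1Core h1Residual h1Bias
  field_simp
  ring

section Scenario1

variable {Ω E : Type*} [MeasurableSpace Ω] {P : Measure Ω} {X : Ω → E} {S A Y : Ω → ℝ}
  {μ11 μ10 m0 g q m11 m10 m00 t : E → ℝ} {ε M : ℝ}

theorem isCentered_h1Bias_of_ratio_eq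
    (h : ∀ᵐ ω ∂P, m11 (X ω) / m10 (X ω) = μ11 (X ω) / μ10 (X ω)) :
    IsCentered P fun ω => h1Bias (S ω) (μ11 (X ω)) (μ10 (X ω)) (m0 (X ω))
      (m11 (X ω)) (m10 (X ω)) (m00 (X ω)) (t (X ω)) :=
  isCentered_of_ae_eq_zero <| h.mono fun ω hω => by
    simp only [h1Bias, hω, sub_self, mul_zero]
    rfl

variable [MeasurableSpace E] [IsFiniteMeasure P]

theorem isCentered_h1Residual
    (hX : Measurable X) (hS : Measurable S) (hA : Measurable A) (hY : Measurable Y)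
    (hS01 : ∀ ω, S ω = 0 ∨ S ω = 1) (hA01 : ∀ ω, A ω = 0 ∨ A ω = 1)
    (hμ11 : IsVersion P X Y {ω | S ω = 1 ∧ A ω = 1} μ11)
    (hμ10 : IsVersion P X Y {ω | S ω = 1 ∧ A ω = 0} μ10)
    (hm0 : IsVersion P X Y {ω | S ω = 0} m0)
    (hq : IsVersion P X A {ω | S ω = 1} q) (hε : 0 < ε)
    (hbd : ∀ᵐ ω ∂P, ε ≤ q (X ω) ∧ q (X ω) ≤ 1 - ε ∧ ε ≤ |μ10 (X ω)| ∧
      |μ11 (X ω)| ≤ M ∧ |μ10 (X ω)| ≤ M ∧ |m0 (X ω)| ≤ M ∧ |Y ω| ≤ M)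
    (hadm : Admissible1 P X ε M m11 m10 m00 t) :
    IsCentered P fun ω => h1Residual (S ω) (A ω) (Y ω) (q (X ω)) (m11 (X ω)) (m10 (X ω))
      (m00 (X ω)) (t (X ω)) (μ11 (X ω)) (μ10 (X ω)) (m0 (X ω)) := by
  obtain ⟨hm11, hm10, hm00, ht, hadm⟩ := hadm
  simp only [Filter.eventually_and] at hbd hadm
  obtain ⟨hq1, hq2, hμ10ε, hμ11M, hμ10M, hm0M, hYM⟩ := hbd
  obtain ⟨hm10ε, hm11M, hm10M, hm00M, ht0, htM⟩ := hadm
  obtain ⟨hμ11m, hμ10m, hm0m, hqm⟩ :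
      Measurable μ11 ∧ Measurable μ10 ∧ Measurable m0 ∧ Measurable q :=
    ⟨hμ11.1, hμ10.1, hm0.1, hq.1⟩
  have bdd {f : E → ℝ} (hf : Measurable f) {C : ℝ} (hC : ∀ᵐ ω ∂P, |f (X ω)| ≤ C) :=
    memLp_top_comp_of_abs_le hX hf hC
  have Lμ11 := bdd hμ11m hμ11M
  have Lμ10 := bdd hμ10m hμ10M
  have Lm11 := bdd hm11 hm11M
  have Lm10 := bdd hm10 hm10M
  have Lt := bdd ht (C := M) <| by
    filter_upwards [ht0, htM] with ω h0 hM using abs_le.2 ⟨by linarith, hM⟩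
  have Lq := bdd hqm (C := 1) <| by
    filter_upwards [hq1, hq2] with ω h1 h2 using abs_le.2 ⟨by linarith, by linarith⟩
  have LY := memLp_top_of_abs_le hY.aestronglyMeasurable hYM
  have Lr := Lμ11.div_of_le_abs (hμ10m.comp hX).aestronglyMeasurable hε hμ10ε
  have Lr' := Lm11.div_of_le_abs (hm10.comp hX).aestronglyMeasurable hε hm10ε
  have Lw := ((bdd hm00 hm00M).div_of_le_abs (hm10.comp hX).aestronglyMeasurable hε
    hm10ε).mul' Lt (r := ∞)
  have Lf1 := Lw.div_of_le_abs (hqm.comp hX).aestronglyMeasurable hε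
    (hq1.mono fun ω h => h.trans (le_abs_self _))
  have Lf2 := (Lr'.mul' Lw (r := ∞)).div_of_le_abs
    (measurable_const.sub (hqm.comp hX)).aestronglyMeasurable hε
    (hq2.mono fun ω h => (by linarith : ε ≤ 1 - q (X ω)).trans (le_abs_self _))
  have hS1 : MeasurableSet {ω | S ω = 1} := hS (measurableSet_singleton 1)
  have P1 := hm0.isCentered (hS (measurableSet_singleton 0)) (indicator_one_setOf_eq_zero hS01)
    (LY.integrable le_top) ((bdd hm0m hm0M).integrable le_top)
    (h := fun x => m11 x / m10 x - μ11 x / μ10 x) (by fun_prop) (Lr'.sub Lr)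
  have P2 := hμ11.isCentered (hS1.inter (hA (measurableSet_singleton 1)))
    (indicator_one_setOf_eq_one_and_eq_one hS01 hA01)
    (LY.integrable le_top) (Lμ11.integrable le_top)
    (h := fun x => t x * (m00 x / m10 x) / q x) (by fun_prop) Lf1
  have P3 := hμ10.isCentered (hS1.inter (hA (measurableSet_singleton 0)))
    (indicator_one_setOf_eq_one_and_eq_zero hS01 hA01)
    (LY.integrable le_top) (Lμ10.integrable le_top)
    (h := fun x => t x * (m00 x / m10 x) * (m11 x / m10 x) / (1 - q x)) (by fun_prop) Lf2
  have P4 := hq.isCentered hS1 (indicator_one_setOf_eq_one hS01)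
    ((memLp_top_of_zero_or_one hA hA01).integrable le_top) (Lq.integrable le_top)
    (h := fun x => (μ11 x - m11 x) * (t x * (m00 x / m10 x) / q x) +
      (μ10 x - m10 x) * (t x * (m00 x / m10 x) * (m11 x / m10 x) / (1 - q x))) (by fun_prop)
    ((Lf1.mul' (Lμ11.sub Lm11) (r := ∞)).add (Lf2.mul' (Lμ10.sub Lm10) (r := ∞)))
  exact ((P1.add P2).sub P3).add P4

theorem integral_H1_eq_condMean_of_isCentered_h1Bias
    (hX : Measurable X) (hS : Measurable S) (hA : Measurable A) (hY : Measurable Y)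
    (hS01 : ∀ ω, S ω = 0 ∨ S ω = 1) (hA01 : ∀ ω, A ω = 0 ∨ A ω = 1)
    (hμ11 : IsVersion P X Y {ω | S ω = 1 ∧ A ω = 1} μ11)
    (hμ10 : IsVersion P X Y {ω | S ω = 1 ∧ A ω = 0} μ10)
    (hm0 : IsVersion P X Y {ω | S ω = 0} m0)
    (hq : IsVersion P X A {ω | S ω = 1} q) (hε : 0 < ε)
    (hbd : ∀ᵐ ω ∂P, ε ≤ q (X ω) ∧ q (X ω) ≤ 1 - ε ∧ ε ≤ |μ10 (X ω)| ∧
      |μ11 (X ω)| ≤ M ∧ |μ10 (X ω)| ≤ M ∧ |m0 (X ω)| ≤ M ∧ |Y ω| ≤ M)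
    (hadm : Admissible1 P X ε M m11 m10 m00 t)
    (hbias : IsCentered P fun ω => h1Bias (S ω) (μ11 (X ω)) (μ10 (X ω)) (m0 (X ω))
      (m11 (X ω)) (m10 (X ω)) (m00 (X ω)) (t (X ω))) :
    ∫ ω, H1 P X S A Y q m11 m10 m00 t ω ∂P
      = condMean P (fun ω => μ11 (X ω) / μ10 (X ω) * Y ω) {ω | S ω = 0} := by
  have hres := isCentered_h1Residual hX hS hA hY hS01 hA01 hμ11 hμ10 hm0 hq hε hbd hadm
  have hrY : Integrable (fun ω => μ11 (X ω) / μ10 (X ω) * Y ω) P := by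
    have Lr := (memLp_top_comp_of_abs_le hX hμ11.1 (hbd.mono fun _ h => h.2.2.2.1)).div_of_le_abs
      (hμ10.1.comp hX).aestronglyMeasurable hε (hbd.mono fun _ h => h.2.2.1)
    have LY := memLp_top_of_abs_le hY.aestronglyMeasurable (hbd.mono fun _ h => h.2.2.2.2.2.2)
    exact (LY.mul' Lr (r := ∞)).integrable le_top
  refine integral_inv_mul_eq_condMean hS hS01 hrY ((hres.add hbias).congr ?_)
  filter_upwards [hbd, hadm.2.2.2.2] with ω ⟨hq1, hq2, hμ10ε, _⟩ ⟨hm10ε, _⟩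
  exact (h1Core_sub_eq (hε.trans_le hq1).ne' (by linarith) (abs_pos.1 (hε.trans_le hm10ε))
    (abs_pos.1 (hε.trans_le hμ10ε))).symm

theorem isCentered_h1Bias_of_eq (hX : Measurable X) (hS : Measurable S)
    (hS01 : ∀ ω, S ω = 0 ∨ S ω = 1) (hg : IsVersion P X S Set.univ g)
    (hμ11 : Measurable μ11) (hμ10 : Measurable μ10) (hm0 : Measurable m0) (hε : 0 < ε)
    (hbd : ∀ᵐ ω ∂P, ε ≤ g (X ω) ∧ g (X ω) ≤ 1 - ε ∧ ε ≤ |μ10 (X ω)| ∧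
      |μ11 (X ω)| ≤ M ∧ |m0 (X ω)| ≤ M)
    (hadm : Admissible1 P X ε M m11 m10 m00 t)
    (h : ∀ᵐ ω ∂P, m00 (X ω) = m0 (X ω) ∧ m10 (X ω) = μ10 (X ω) ∧
      t (X ω) = (1 - g (X ω)) / g (X ω)) :
    IsCentered P fun ω => h1Bias (S ω) (μ11 (X ω)) (μ10 (X ω)) (m0 (X ω))
      (m11 (X ω)) (m10 (X ω)) (m00 (X ω)) (t (X ω)) := by
  obtain ⟨hm11, hm10, -, -, hadm⟩ := hadm
  simp only [Filter.eventually_and] at hbd hadm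
  obtain ⟨hg1, hg2, hμ10ε, hμ11M, hm0M⟩ := hbd
  obtain ⟨hm10ε, hm11M, -, -, -, -⟩ := hadm
  have hgm := hg.1
  have Lg := memLp_top_comp_of_abs_le hX hgm (C := 1)
    (by filter_upwards [hg1, hg2] with ω h1 h2 using abs_le.2 ⟨by linarith, by linarith⟩)
  have Lr := (memLp_top_comp_of_abs_le hX hμ11 hμ11M).div_of_le_abs
    (hμ10.comp hX).aestronglyMeasurable hε hμ10ε
  have Lr' := (memLp_top_comp_of_abs_le hX hm11 hm11M).div_of_le_abs
    (hm10.comp hX).aestronglyMeasurable hε hm10ε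
  have Lh := ((Lr.sub Lr').mul' (memLp_top_comp_of_abs_le hX hm0 hm0M) (r := ∞)).div_of_le_abs
    (hgm.comp hX).aestronglyMeasurable hε (hg1.mono fun ω h => h.trans (le_abs_self _))
  refine (hg.isCentered MeasurableSet.univ (w := fun _ => 1) (Set.indicator_univ 1)
    ((memLp_top_of_zero_or_one hS hS01).integrable le_top) (Lg.integrable le_top)
    (h := fun x => m0 x * (μ11 x / μ10 x - m11 x / m10 x) / g x) (by fun_prop) Lh).congr ?_
  filter_upwards [h, hg1, hμ10ε] with ω ⟨h00, h10, ht⟩ hg1 hμ10ε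
  have hgne : g (X ω) ≠ 0 := (hε.trans_le hg1).ne'
  have hμ10ne : μ10 (X ω) ≠ 0 := abs_pos.1 (hε.trans_le hμ10ε)
  -- the selection weight `τ = (1 - g) / g` turns `S τ - (1 - S)` into `(S - g) / g`
  rw [h1Bias, h00, h10, ht]
  field_simp
  ring

end Scenario1

theorem H1_model_double_robustness_general
    {Ω E : Type*} [MeasurableSpace Ω] [MeasurableSpace E]
    (P : Measure Ω) [IsProbabilityMeasure P]
    (X : Ω → E) (S A Y : Ω → ℝ)
    (hX : Measurable X) (hS : Measurable S) (hA : Measurable A) (hY : Measurable Y)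
    (hS01 : ∀ ω, S ω = 0 ∨ S ω = 1) (hA01 : ∀ ω, A ω = 0 ∨ A ω = 1)
    (μ11 μ10 m0 g q : E → ℝ)
    (hμ11 : IsVersion P X Y {ω | S ω = 1 ∧ A ω = 1} μ11)
    (hμ10 : IsVersion P X Y {ω | S ω = 1 ∧ A ω = 0} μ10)
    (hm0 : IsVersion P X Y {ω | S ω = 0} m0)
    (hg : IsVersion P X S Set.univ g)
    (hq : IsVersion P X A {ω | S ω = 1} q)
    (ε M : ℝ) (hε0 : 0 < ε)
    (hbd : ∀ᵐ ω ∂P,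
      ε ≤ g (X ω) ∧ g (X ω) ≤ 1 - ε ∧ ε ≤ q (X ω) ∧ q (X ω) ≤ 1 - ε ∧
      ε ≤ |μ10 (X ω)| ∧ |μ11 (X ω)| ≤ M ∧ |μ10 (X ω)| ≤ M ∧ |m0 (X ω)| ≤ M ∧
      |Y ω| ≤ M ∧ (1 - g (X ω)) / g (X ω) ≤ M)
    :
    ∀ m11 m10 m00 t : E → ℝ, Admissible1 P X ε M m11 m10 m00 t →
      ((∀ᵐ ω ∂P, m11 (X ω) / m10 (X ω) = μ11 (X ω) / μ10 (X ω)) ∨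
        (∀ᵐ ω ∂P, m00 (X ω) = m0 (X ω) ∧ m10 (X ω) = μ10 (X ω) ∧
          t (X ω) = (1 - g (X ω)) / g (X ω))) →
      ∫ ω, H1 P X S A Y q m11 m10 m00 t ω ∂P
        = condMean P (fun ω => μ11 (X ω) / μ10 (X ω) * Y ω) {ω | S ω = 0} := by
  intro m11 m10 m00 t hadm hcase
  refine integral_H1_eq_condMean_of_isCentered_h1Bias hX hS hA hY hS01 hA01 hμ11 hμ10 hm0 hq hε0
    (hbd.mono fun _ ⟨_, _, hq1, hq2, hμ10ε, hμ11M, hμ10M, hm0M, hYM, _⟩ =>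
      ⟨hq1, hq2, hμ10ε, hμ11M, hμ10M, hm0M, hYM⟩) hadm ?_
  rcases hcase with hratio | hnuisance
  · exact isCentered_h1Bias_of_ratio_eq hratio
  · exact isCentered_h1Bias_of_eq hX hS hS01 hg hμ11.1 hμ10.1 hm0.1 hε0
      (hbd.mono fun _ ⟨hg1, hg2, _, _, hμ10ε, hμ11M, _, hm0M, _, _⟩ =>
        ⟨hg1, hg2, hμ10ε, hμ11M, hm0M⟩) hadm hnuisance

/-- Model double robustness in Scenario 1 (Section 2.4): for admissible nuisance
candidates, if either (a) `μ̃₁₁/μ̃₁₀ = μ₁₁/μ₁₀` a.e. or (b) `μ̃₀₀ = m₀`, `μ̃₁₀ = μ₁₀`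
and `τ̃ = τ` a.e. (with `τ = (1−g)/g`), then `E[H₁(μ̃₁₁,μ̃₁₀,μ̃₀₀,τ̃)] = α₁`. -/
theorem H1_model_double_robustness
    {Ω E : Type*} [MeasurableSpace Ω] [MeasurableSpace E]
    (P : Measure Ω) [IsProbabilityMeasure P]
    (X : Ω → E) (S A Y : Ω → ℝ)
    (hX : Measurable X) (hS : Measurable S) (hA : Measurable A) (hY : Measurable Y)
    (hS01 : ∀ ω, S ω = 0 ∨ S ω = 1) (hA01 : ∀ ω, A ω = 0 ∨ A ω = 1)
    (hPS0 : 0 < P {ω | S ω = 0})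
    (hPS1A1 : 0 < P {ω | S ω = 1 ∧ A ω = 1})
    (hPS1A0 : 0 < P {ω | S ω = 1 ∧ A ω = 0})
    (μ11 μ10 m0 g q : E → ℝ)
    (hμ11 : IsVersion P X Y {ω | S ω = 1 ∧ A ω = 1} μ11)
    (hμ10 : IsVersion P X Y {ω | S ω = 1 ∧ A ω = 0} μ10)
    (hm0 : IsVersion P X Y {ω | S ω = 0} m0)
    (hg : IsVersion P X S Set.univ g)
    (hq : IsVersion P X A {ω | S ω = 1} q)
    (ε M : ℝ) (hε0 : 0 < ε) (hε1 : ε < 1) (hM : 1 ≤ M)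
    (hbd : ∀ᵐ ω ∂P,
      ε ≤ g (X ω) ∧ g (X ω) ≤ 1 - ε ∧ ε ≤ q (X ω) ∧ q (X ω) ≤ 1 - ε ∧
      ε ≤ |μ10 (X ω)| ∧ |μ11 (X ω)| ≤ M ∧ |μ10 (X ω)| ≤ M ∧ |m0 (X ω)| ≤ M ∧
      |Y ω| ≤ M ∧ (1 - g (X ω)) / g (X ω) ≤ M)
    (htruth : Admissible1 P X ε M μ11 μ10 m0 (fun x => (1 - g x) / g x))
    :
    ∀ m11 m10 m00 t : E → ℝ, Admissible1 P X ε M m11 m10 m00 t →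
      ((∀ᵐ ω ∂P, m11 (X ω) / m10 (X ω) = μ11 (X ω) / μ10 (X ω)) ∨
        (∀ᵐ ω ∂P, m00 (X ω) = m0 (X ω) ∧ m10 (X ω) = μ10 (X ω) ∧
          t (X ω) = (1 - g (X ω)) / g (X ω))) →
      ∫ ω, H1 P X S A Y q m11 m10 m00 t ω ∂P
        = condMean P (fun ω => μ11 (X ω) / μ10 (X ω) * Y ω) {ω | S ω = 0} :=
  H1_model_double_robustness_general P X S A Y hX hS hA hY hS01 hA01 μ11 μ10 m0 g q hμ11 hμ10 hm0 hg
    hq ε M hε0 hbd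
end
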